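/- Let B be a skew brace such that B³ = 0, let Z_n(B²,+) be the n-th term of the upper central series of (B²,+), and set S_n = {a ∈ B² : a∗b ∈ Z_n(B²,+) for all b ∈ B}. Then S_n is an ideal of B for every n ≥ 0. -/

import Mathlib

/-- A (left) skew brace: a set with two group structures `(B,+)` and `(B,·)`
satisfying `a·(b+c) = a·b - a + a·c`. -/
class SkewBrace (B : Type*) extends AddGroup B, Group B where
  mul_add_compat : ∀ a b c : B, a * (b + c) = a * b - a + a * c

namespace SkewBrace

variable {B : Type*} [SkewBrace B]

/-- The star product `a ∗ b = -a + a·b - b`. -/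
def star (a b : B) : B := -a + a * b - b

/-- For subsets `X, Y ⊆ B`, `X ∗ Y` is the additive subgroup generated by
all `x ∗ y` with `x ∈ X`, `y ∈ Y`. -/
def starSet (X Y : Set B) : AddSubgroup B :=
  AddSubgroup.closure (Set.image2 star X Y)

/-- The left series, indexed so that `leftSeries B n = B^{n+1}`:
`leftSeries B 0 = B¹ = B` and `leftSeries B (n+1) = B ∗ leftSeries B n`. -/
def leftSeries (B : Type*) [SkewBrace B] : ℕ → AddSubgroup B
  | 0 => ⊤
  | n + 1 => starSet Set.univ (leftSeries B n)

/-- The right series, indexed so that `rightSeries B n = B^{(n+1)}`: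
`rightSeries B 0 = B^{(1)} = B` and `rightSeries B (n+1) = (rightSeries B n) ∗ B`. -/
def rightSeries (B : Type*) [SkewBrace B] : ℕ → AddSubgroup B
  | 0 => ⊤
  | n + 1 => starSet (rightSeries B n : Set B) Set.univ

end SkewBrace

namespace SkewBrace

/-- The `n`-th term of the upper central series of the additive group `(B²,+)`,
viewed as a subset of `B`. -/
def upperCentralSet (B : Type*) [SkewBrace B] (n : ℕ) : Set B :=
  {x : B | ∃ hx : x ∈ leftSeries B 1,
    Multiplicative.ofAdd (⟨x, hx⟩ : ↥(leftSeries B 1)) ∈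
      upperCentralSeries (Multiplicative ↥(leftSeries B 1)) n}

/-- `S_n = {a ∈ B² : a ∗ b ∈ Z_n(B²,+) for all b ∈ B}`. -/
def Sset (B : Type*) [SkewBrace B] (n : ℕ) : Set B :=
  {a : B | a ∈ leftSeries B 1 ∧ ∀ b : B, star a b ∈ upperCentralSet B n}

end SkewBrace

namespace SkewBrace

variable {B : Type*} [SkewBrace B]

/-- An ideal of a skew brace `B`: a normal subgroup of `(B,+)` with
`I ∗ B ⊆ I` and `B ∗ I ⊆ I`. -/
def IsIdeal (I : AddSubgroup B) : Prop :=
  (∀ i ∈ I, ∀ b : B, b + i - b ∈ I) ∧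
  (∀ i ∈ I, ∀ b : B, star i b ∈ I) ∧
  (∀ i ∈ I, ∀ b : B, star b i ∈ I)

end SkewBrace

/-!
Since `B³ = 0`, every `λ_a` fixes `B²` pointwise, i.e. `a · c = a + c` for `c ∈ B²`. Hence `+`
and `·` agree on `B²`, and `(B², +)` is abelian: for `g ∈ B²`, applying `λ_a` to
`g + b = b + (-b + g + b)` shows that `g` commutes with `a ∗ b`. So `Z_n(B², +) = B²` for
`n ≥ 1`, and `S_n = B²`, which is an ideal of any skew brace. Finally `S_0 = B² ∩ ker λ`: it is an
additive subgroup because `+ = ·` on `B²`, and it is normal in `(B, +)` because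
`b + a - b = b a b⁻¹` for `a ∈ S_0`.
-/

namespace SkewBrace

variable {B : Type*} [SkewBrace B]

theorem mul_zero_eq_self (a : B) : a * 0 = a := by
  have h := mul_add_compat a 0 0
  rw [add_zero, sub_eq_add_neg, add_assoc, left_eq_add, neg_add_eq_zero] at h
  exact h.symm

theorem one_eq_zero : (1 : B) = 0 :=
  (mul_zero_eq_self (1 : B)).symm.trans (one_mul 0)

def lambdaAddHom (a : B) : B →+ B :=
  AddMonoidHom.mk' (fun b => -a + a * b) fun b c => by
    simp only [mul_add_compat, sub_eq_add_neg, add_assoc]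

theorem lambdaAddHom_apply (a b : B) : lambdaAddHom a b = -a + a * b := rfl

theorem mul_neg_eq (a b : B) : a * -b = a - a * b + a := by
  have h := map_neg (lambdaAddHom a) b
  rw [lambdaAddHom_apply, lambdaAddHom_apply, neg_add_rev, neg_neg, neg_add_eq_iff_eq_add] at h
  rw [h, sub_eq_add_neg, add_assoc]

def lambda : B →* AddMonoid.End B where
  toFun := lambdaAddHom
  map_one' := by
    ext b
    show -1 + 1 * b = b
    rw [one_mul, one_eq_zero, neg_zero, zero_add]
  map_mul' a b := by
    ext c
    show -(a * b) + a * b * c = -a + a * (-b + b * c)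
    rw [mul_add_compat, mul_neg_eq, mul_assoc]
    simp [sub_eq_add_neg, add_assoc]

theorem lambda_apply (a b : B) : lambda a b = -a + a * b := rfl

theorem star_eq_lambda_sub (a b : B) : star a b = lambda a b - b := rfl

theorem star_eq_zero_iff {a b : B} : star a b = 0 ↔ a * b = a + b := by
  rw [star_eq_lambda_sub, lambda_apply, sub_eq_zero, neg_add_eq_iff_eq_add]

theorem forall_star_eq_zero_iff {a : B} : (∀ b, star a b = 0) ↔ a ∈ lambda.ker := by
  simp only [MonoidHom.mem_ker, star_eq_lambda_sub, sub_eq_zero, AddMonoid.End.ext_iff,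
    AddMonoid.End.coe_one, id]

theorem mul_eq_add_of_mem_ker {a : B} (ha : a ∈ lambda.ker) (b : B) : a * b = a + b :=
  star_eq_zero_iff.mp (forall_star_eq_zero_iff.mpr ha b)

theorem leftSeries_one_eq : leftSeries B 1 = AddSubgroup.closure (Set.image2 star .univ .univ) :=
  rfl

theorem star_mem_leftSeries_one (a b : B) : star a b ∈ leftSeries B 1 :=
  AddSubgroup.subset_closure (Set.mem_image2_of_mem trivial trivial)

theorem add_star_add_neg (a b c : B) : b + star a c + -b = -star a b + star a (b + c) := by
  simp only [star_eq_lambda_sub, map_add, sub_eq_add_neg, neg_add_rev, neg_neg, add_assoc,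
    neg_add_cancel_left]

instance leftSeries_one_normal : (leftSeries B 1).Normal where
  conj_mem g hg b := by
    rw [leftSeries_one_eq] at hg ⊢
    induction hg using AddSubgroup.closure_induction with
    | mem _ h =>
      obtain ⟨a, -, c, -, rfl⟩ := h
      rw [add_star_add_neg, ← leftSeries_one_eq]
      exact add_mem (neg_mem (star_mem_leftSeries_one a b)) (star_mem_leftSeries_one a (b + c))
    | zero => simp
    | add x y _ _ hx hy => simpa [sub_eq_add_neg, add_assoc] using add_mem hx hy
    | neg x _ hx => simpa [sub_eq_add_neg, add_assoc] using neg_mem hx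

theorem isIdeal_leftSeries_one : IsIdeal (leftSeries B 1) :=
  ⟨fun i hi b => sub_eq_add_neg (b + i) b ▸ leftSeries_one_normal.conj_mem i hi b,
    fun i _ b => star_mem_leftSeries_one i b, fun i _ b => star_mem_leftSeries_one b i⟩

theorem star_eq_zero_of_mem_leftSeries_one (h3 : leftSeries B 2 = ⊥) {c : B}
    (hc : c ∈ leftSeries B 1) (a : B) : star a c = 0 := by
  have h : star a c ∈ leftSeries B 2 :=
    AddSubgroup.subset_closure (Set.mem_image2_of_mem trivial hc)
  rwa [h3, AddSubgroup.mem_bot] at h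

theorem lambda_apply_of_mem_leftSeries_one (h3 : leftSeries B 2 = ⊥) {c : B}
    (hc : c ∈ leftSeries B 1) (a : B) : lambda a c = c :=
  sub_eq_zero.mp (star_eq_zero_of_mem_leftSeries_one h3 hc a)

theorem mul_eq_add_of_mem_leftSeries_one (h3 : leftSeries B 2 = ⊥) {c : B}
    (hc : c ∈ leftSeries B 1) (a : B) : a * c = a + c :=
  star_eq_zero_iff.mp (star_eq_zero_of_mem_leftSeries_one h3 hc a)

theorem inv_eq_neg_of_mem_leftSeries_one (h3 : leftSeries B 2 = ⊥) {c : B}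
    (hc : c ∈ leftSeries B 1) : c⁻¹ = -c :=
  (eq_inv_of_mul_eq_one_right (by
    rw [mul_eq_add_of_mem_leftSeries_one h3 (neg_mem hc), add_neg_cancel, one_eq_zero])).symm

theorem star_add_comm_of_mem_leftSeries_one (h3 : leftSeries B 2 = ⊥) {g : B}
    (hg : g ∈ leftSeries B 1) (a b : B) : star a b + g = g + star a b := by
  have hg' : -b + g + b ∈ leftSeries B 1 := by
    simpa using leftSeries_one_normal.conj_mem g hg (-b)
  have key : g + lambda a b = lambda a b + (-b + g + b) := calc
    g + lambda a b = lambda a (g + b) := by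
      rw [map_add, lambda_apply_of_mem_leftSeries_one h3 hg]
    _ = lambda a (b + (-b + g + b)) := by rw [add_assoc, add_neg_cancel_left]
    _ = lambda a b + (-b + g + b) := by
      rw [map_add, lambda_apply_of_mem_leftSeries_one h3 hg']
  rw [star_eq_lambda_sub, sub_eq_add_neg, add_assoc, ← add_assoc g, key]
  simp [add_assoc]

theorem add_comm_of_mem_leftSeries_one (h3 : leftSeries B 2 = ⊥) {g h : B}
    (hg : g ∈ leftSeries B 1) (hh : h ∈ leftSeries B 1) : g + h = h + g := by
  have hle : leftSeries B 1 ≤ AddSubgroup.centralizer (leftSeries B 1) := by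
    refine (AddSubgroup.closure_le _).mpr ?_
    rintro _ ⟨a, -, b, -, rfl⟩ h hh
    exact (star_add_comm_of_mem_leftSeries_one h3 hh a b).symm
  exact (hle hg h hh).symm

theorem add_add_neg_eq_mul_mul_inv (h3 : leftSeries B 2 = ⊥) {a : B}
    (ha : a ∈ leftSeries B 1) (ha' : a ∈ lambda.ker) (b : B) : b + a + -b = b * a * b⁻¹ := by
  rw [mul_assoc, mul_eq_add_of_mem_ker ha', mul_add_compat,
    mul_eq_add_of_mem_leftSeries_one h3 ha, mul_inv_cancel, one_eq_zero, add_zero, sub_eq_add_neg]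

def kerLambdaSq (h3 : leftSeries B 2 = ⊥) : AddSubgroup B where
  carrier := {a | a ∈ leftSeries B 1 ∧ a ∈ lambda.ker}
  add_mem' := by
    rintro a c ⟨ha, ha'⟩ ⟨hc, hc'⟩
    exact ⟨add_mem ha hc, mul_eq_add_of_mem_leftSeries_one h3 hc a ▸ mul_mem ha' hc'⟩
  zero_mem' := ⟨zero_mem _, one_eq_zero (B := B) ▸ one_mem _⟩
  neg_mem' := by
    rintro a ⟨ha, ha'⟩
    exact ⟨neg_mem ha, inv_eq_neg_of_mem_leftSeries_one h3 ha ▸ inv_mem ha'⟩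

theorem isIdeal_kerLambdaSq (h3 : leftSeries B 2 = ⊥) : IsIdeal (kerLambdaSq h3) := by
  refine ⟨fun i ⟨hi, hi'⟩ b => ?_, fun i ⟨_, hi'⟩ b => ?_, fun i ⟨hi, _⟩ b => ?_⟩
  · rw [sub_eq_add_neg]
    refine ⟨leftSeries_one_normal.conj_mem i hi b, ?_⟩
    rw [add_add_neg_eq_mul_mul_inv h3 hi hi']
    exact (MonoidHom.normal_ker lambda).conj_mem i hi' b
  · rw [forall_star_eq_zero_iff.mpr hi' b]
    exact zero_mem _
  · rw [star_eq_zero_of_mem_leftSeries_one h3 hi b]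
    exact zero_mem _

theorem mem_upperCentralSet_zero {x : B} : x ∈ upperCentralSet B 0 ↔ x = 0 := by
  change (∃ hx : x ∈ leftSeries B 1, _ ∈ Subgroup.upperCentralSeries _ 0) ↔ _
  simp only [Subgroup.upperCentralSeries_zero, Subgroup.mem_bot, ofAdd_eq_one,
    AddSubgroup.mk_eq_zero]
  exact ⟨fun ⟨_, h⟩ => h, fun h => ⟨h ▸ zero_mem _, h⟩⟩

theorem coe_kerLambdaSq (h3 : leftSeries B 2 = ⊥) : (kerLambdaSq h3 : Set B) = Sset B 0 := by
  ext a
  simp only [Sset, mem_upperCentralSet_zero, forall_star_eq_zero_iff]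
  rfl

theorem leftSeries_one_subset_upperCentralSet (h3 : leftSeries B 2 = ⊥) (n : ℕ) :
    (leftSeries B 1 : Set B) ⊆ upperCentralSet B (n + 1) := fun x hx =>
  ⟨hx, Subgroup.upperCentralSeries_mono _ (Nat.le_add_left 1 n) <| by
    rw [Subgroup.upperCentralSeries_one, Subgroup.mem_center_iff]
    exact fun y => Subtype.ext (add_comm_of_mem_leftSeries_one h3 y.2 hx)⟩

theorem Sset_succ (h3 : leftSeries B 2 = ⊥) (n : ℕ) : Sset B (n + 1) = leftSeries B 1 :=
  Set.ext fun a => ⟨And.left, fun ha =>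
    ⟨ha, fun b => leftSeries_one_subset_upperCentralSet h3 n (star_mem_leftSeries_one a b)⟩⟩

end SkewBrace

open SkewBrace in
/-- If `B³ = 0`, then `S_n = {a ∈ B² : a ∗ b ∈ Z_n(B²,+) for all b ∈ B}` is an
ideal of `B` for every `n`. -/
theorem Sset_isIdeal (B : Type*) [SkewBrace B]
    (h3 : leftSeries B 2 = ⊥) :
    ∀ n : ℕ, ∃ S : AddSubgroup B, (S : Set B) = Sset B n ∧ IsIdeal S := by
  rintro (_ | n)
  · exact ⟨kerLambdaSq h3, coe_kerLambdaSq h3, isIdeal_kerLambdaSq h3⟩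
  · exact ⟨leftSeries B 1, (Sset_succ h3 n).symm, isIdeal_leftSeries_one⟩
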